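/- (μ-independent convergence of damped PFASST.) Define P̂₂(μ) = I_{LMN} − 2μ (I_L ⊗ Q_Δ ⊗ A) and T₂(μ) = I_{LMN} − P̂₂(μ)^{-1} C(μ). Assume Q, Q_Δ, A, Q̃_Δ and Ã are invertible and that ‖ I_L ⊗ (I_M − Q_Δ^{-1} Q) ⊗ I_N ‖ < 1. Then there exist constants c > 0 and μ* > 0 such that for all μ ≥ μ* and all integers k ≥ 1, the PFASST iteration matrix with k damped pre-smoothing steps satisfies ‖ ( C(μ)^{-1} − T_C^F P̃(μ)^{-1} T_F^C ) · C(μ) · T₂(μ)^k ‖ ≤ c · √(8/(kπ)); in particular the bound tends to zero as k → ∞, independently of μ. -/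

import Mathlib

/-!
STATEMENT 18 (μ-independent convergence of damped PFASST): With
P̂₂(μ) = I − 2μ (I_L ⊗ Q_Δ ⊗ A) and T₂(μ) = I − P̂₂(μ)⁻¹ C(μ), assume Q, Q_Δ, A,
Q̃_Δ and Ã are invertible and ‖I_L ⊗ (I_M − Q_Δ⁻¹Q) ⊗ I_N‖ < 1. Then there exist
c > 0 and μ* > 0 such that for all μ ≥ μ* and all k ≥ 1,
‖ (C(μ)⁻¹ − T_C^F P̃(μ)⁻¹ T_F^C) · C(μ) · T₂(μ)^k ‖ ≤ c · √(8/(kπ)).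
-/

noncomputable section

open Matrix
open scoped Kronecker

/-- Complexification of a real matrix. -/
def cmplx {m n : Type*} (A : Matrix m n ℝ) : Matrix m n ℂ := A.map (fun x => (x : ℂ))

/-- The matrix `E` with ones on the first subdiagonal and zeros elsewhere. -/
def Emat (L : ℕ) : Matrix (Fin L) (Fin L) ℂ :=
  Matrix.of fun i j => if (i : ℕ) = (j : ℕ) + 1 then 1 else 0

/-- The matrix `N_M` whose last column consists of ones, all other entries zero. -/
def Nmat (M : ℕ) : Matrix (Fin M) (Fin M) ℂ :=
  Matrix.of fun _ j => if (j : ℕ) = M - 1 then 1 else 0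

/-- `H = N_M ⊗ I_N`. -/
def Hmat (M N : ℕ) : Matrix (Fin M × Fin N) (Fin M × Fin N) ℂ :=
  Nmat M ⊗ₖ (1 : Matrix (Fin N) (Fin N) ℂ)

/-- `E ⊗ H`. -/
def EH (L M N : ℕ) : Matrix (Fin L × Fin M × Fin N) (Fin L × Fin M × Fin N) ℂ :=
  Emat L ⊗ₖ Hmat M N

/-- The composite collocation matrix `C(μ) = I − μ (I_L ⊗ Q ⊗ A) − E ⊗ H`. -/
def Cmat (L : ℕ) {M N : ℕ} (Q : Matrix (Fin M) (Fin M) ℝ) (A : Matrix (Fin N) (Fin N) ℂ)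
    (μ : ℝ) : Matrix (Fin L × Fin M × Fin N) (Fin L × Fin M × Fin N) ℂ :=
  1 - (μ : ℂ) • ((1 : Matrix (Fin L) (Fin L) ℂ) ⊗ₖ (cmplx Q ⊗ₖ A)) - EH L M N

/-- The approximative block Jacobi preconditioner `P̂(μ) = I − μ (I_L ⊗ Q_Δ ⊗ A)`. -/
def Phat (L : ℕ) {M N : ℕ} (QΔ : Matrix (Fin M) (Fin M) ℝ) (A : Matrix (Fin N) (Fin N) ℂ)
    (μ : ℝ) : Matrix (Fin L × Fin M × Fin N) (Fin L × Fin M × Fin N) ℂ :=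
  1 - (μ : ℂ) • ((1 : Matrix (Fin L) (Fin L) ℂ) ⊗ₖ (cmplx QΔ ⊗ₖ A))

/-- The smoother iteration matrix `T_S(μ) = I − P̂(μ)⁻¹ C(μ)`. -/
def Tsmooth (L : ℕ) {M N : ℕ} (Q QΔ : Matrix (Fin M) (Fin M) ℝ)
    (A : Matrix (Fin N) (Fin N) ℂ) (μ : ℝ) :
    Matrix (Fin L × Fin M × Fin N) (Fin L × Fin M × Fin N) ℂ :=
  1 - (Phat L QΔ A μ)⁻¹ * Cmat L Q A μ

/-- Restriction operator `T_F^C = I_L ⊗ T_{F,Q}^C ⊗ T_{F,A}^C`. -/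
def TFCmat (L : ℕ) {M N M' N' : ℕ} (TFQ : Matrix (Fin M') (Fin M) ℝ)
    (TFA : Matrix (Fin N') (Fin N) ℂ) :
    Matrix (Fin L × Fin M' × Fin N') (Fin L × Fin M × Fin N) ℂ :=
  (1 : Matrix (Fin L) (Fin L) ℂ) ⊗ₖ (cmplx TFQ ⊗ₖ TFA)

/-- Interpolation operator `T_C^F = I_L ⊗ T_{C,Q}^F ⊗ T_{C,A}^F`. -/
def TCFmat (L : ℕ) {M N M' N' : ℕ} (TCQ : Matrix (Fin M) (Fin M') ℝ)
    (TCA : Matrix (Fin N) (Fin N') ℂ) :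
    Matrix (Fin L × Fin M × Fin N) (Fin L × Fin M' × Fin N') ℂ :=
  (1 : Matrix (Fin L) (Fin L) ℂ) ⊗ₖ (cmplx TCQ ⊗ₖ TCA)

/-- The coarse approximative block Gauss-Seidel preconditioner
`P̃(μ) = I − μ (I_L ⊗ Q̃_Δ ⊗ Ã) − E ⊗ H̃`. -/
def Ptilde (L : ℕ) {M' N' : ℕ} (QΔt : Matrix (Fin M') (Fin M') ℝ)
    (At : Matrix (Fin N') (Fin N') ℂ) (μ : ℝ) :
    Matrix (Fin L × Fin M' × Fin N') (Fin L × Fin M' × Fin N') ℂ :=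
  1 - (μ : ℂ) • ((1 : Matrix (Fin L) (Fin L) ℂ) ⊗ₖ (cmplx QΔt ⊗ₖ At)) - EH L M' N'

/-- The coarse-grid correction iteration matrix
`T_CGC(μ) = I − T_C^F P̃(μ)⁻¹ T_F^C C(μ)`. -/
def Tcgc (L : ℕ) {M N M' N' : ℕ} (Q : Matrix (Fin M) (Fin M) ℝ)
    (A : Matrix (Fin N) (Fin N) ℂ)
    (QΔt : Matrix (Fin M') (Fin M') ℝ) (At : Matrix (Fin N') (Fin N') ℂ)
    (TFQ : Matrix (Fin M') (Fin M) ℝ) (TFA : Matrix (Fin N') (Fin N) ℂ)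
    (TCQ : Matrix (Fin M) (Fin M') ℝ) (TCA : Matrix (Fin N) (Fin N') ℂ) (μ : ℝ) :
    Matrix (Fin L × Fin M × Fin N) (Fin L × Fin M × Fin N) ℂ :=
  1 - TCFmat L TCQ TCA * (Ptilde L QΔt At μ)⁻¹ * TFCmat L TFQ TFA * Cmat L Q A μ

/-- The damped block Jacobi preconditioner `P̂₂(μ) = I − 2μ (I_L ⊗ Q_Δ ⊗ A)`. -/
def Phat2 (L : ℕ) {M N : ℕ} (QΔ : Matrix (Fin M) (Fin M) ℝ) (A : Matrix (Fin N) (Fin N) ℂ)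
    (μ : ℝ) : Matrix (Fin L × Fin M × Fin N) (Fin L × Fin M × Fin N) ℂ :=
  1 - ((2 * μ : ℝ) : ℂ) • ((1 : Matrix (Fin L) (Fin L) ℂ) ⊗ₖ (cmplx QΔ ⊗ₖ A))

/-- The damped smoother iteration matrix `T₂(μ) = I − P̂₂(μ)⁻¹ C(μ)`. -/
def Tdamped (L : ℕ) {M N : ℕ} (Q QΔ : Matrix (Fin M) (Fin M) ℝ)
    (A : Matrix (Fin N) (Fin N) ℂ) (μ : ℝ) :
    Matrix (Fin L × Fin M × Fin N) (Fin L × Fin M × Fin N) ℂ :=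
  1 - (Phat2 L QΔ A μ)⁻¹ * Cmat L Q A μ

/-- The operator norm induced by the Euclidean vector norm. -/
def opNorm {n : Type*} [Fintype n] [DecidableEq n] (A : Matrix n n ℂ) : ℝ :=
  ‖Matrix.toEuclideanCLM (𝕜 := ℂ) A‖

/-!
Each of `C(μ)`, `P̂₂(μ)` and `P̃(μ)` has the form `X − μ K` with `K` a Kronecker product of
invertible matrices, so after scaling by `(−μ)⁻¹` it converges to `K` as `μ → ∞`. Hence
`T₂(μ) → I − (2 I⊗Q_Δ⊗A)⁻¹ (I⊗Q⊗A) = ½ (I + B)` with `B = I ⊗ (I − Q_Δ⁻¹Q) ⊗ I`, whose norm is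
`≤ (1 + ‖B‖)/2 < 1`, and the coarse-grid factor `(C⁻¹ − T_C^F P̃⁻¹ T_F^C) C` converges too.
So for large `μ` the iteration matrix is bounded by `D qᵏ` with `q < 1`, and geometric decay
beats `√(8/(kπ))`.
-/

open Filter Topology

theorem exists_pow_le_mul_sqrt_eight_div {q : ℝ} (hq0 : 0 ≤ q) (hq1 : q < 1) :
    ∃ c > 0, ∀ k : ℕ, 1 ≤ k → q ^ k ≤ c * √(8 / (k * Real.pi)) := by
  obtain ⟨C, hC⟩ := (tendsto_self_mul_const_pow_of_lt_one hq0 hq1).bddAbove_range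
  refine ⟨max C 1, by positivity, fun k hk => ?_⟩
  have hk' : (1 : ℝ) ≤ k := by exact_mod_cast hk
  have hkq : k * q ^ k ≤ max C 1 := (hC ⟨k, rfl⟩).trans (le_max_left _ _)
  have hinv : 1 / (k : ℝ) ≤ √(8 / (k * Real.pi)) := by
    rw [Real.le_sqrt (by positivity) (by positivity), div_pow, one_pow,
      div_le_div_iff₀ (by positivity) (by positivity)]
    nlinarith [Real.pi_lt_four]
  calc q ^ k = (k * q ^ k) * (1 / k) := by field_simp
    _ ≤ max C 1 * √(8 / (k * Real.pi)) := by gcongr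

theorem exists_norm_mul_pow_le_of_tendsto {α R : Type*} [SeminormedRing R] {l : Filter α}
    {T G : α → R} {T₀ G₀ : R} (hT : Tendsto T l (𝓝 T₀)) (hT₀ : ‖T₀‖ < 1)
    (hG : Tendsto G l (𝓝 G₀)) :
    ∃ c > 0, ∀ᶠ x in l, ∀ k : ℕ, 1 ≤ k → ‖G x * T x ^ k‖ ≤ c * √(8 / (k * Real.pi)) := by
  obtain ⟨q, hT₀q, hq1⟩ := exists_between hT₀
  obtain ⟨c, hc, hqc⟩ := exists_pow_le_mul_sqrt_eight_div ((norm_nonneg _).trans hT₀q.le) hq1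
  refine ⟨(‖G₀‖ + 1) * c, by positivity, ?_⟩
  filter_upwards [hT.norm.eventually_lt_const hT₀q,
    hG.norm.eventually_lt_const (lt_add_one ‖G₀‖)] with x hTx hGx k hk
  calc ‖G x * T x ^ k‖ ≤ ‖G x‖ * ‖T x‖ ^ k :=
        (norm_mul_le _ _).trans (by gcongr; exact norm_pow_le' _ hk)
    _ ≤ (‖G₀‖ + 1) * q ^ k := by gcongr
    _ ≤ (‖G₀‖ + 1) * (c * √(8 / (k * Real.pi))) := by gcongr; exact hqc k hk
    _ = _ := by ring

theorem isUnit_smul_iff₀ {𝕜 R : Type*} [GroupWithZero 𝕜] [Monoid R] [MulAction 𝕜 R]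
    [SMulCommClass 𝕜 R R] [IsScalarTower 𝕜 R R] {c : 𝕜} (hc : c ≠ 0) (a : R) :
    IsUnit (c • a) ↔ IsUnit a :=
  isUnit_smul_iff (Units.mk0 c hc) a

namespace Matrix

variable {n 𝕜 : Type*} [Fintype n] [DecidableEq n]

theorem inv_smul_of_ne_zero [Field 𝕜] {c : 𝕜} (hc : c ≠ 0) (A : Matrix n n 𝕜) :
    (c • A)⁻¹ = c⁻¹ • A⁻¹ := by
  by_cases hA : IsUnit A.det
  · exact inv_smul' A (Units.mk0 c hc) hA
  · have hcA : ¬IsUnit (c • A).det := by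
      simpa [det_smul, isUnit_iff_ne_zero, hc] using hA
    rw [nonsing_inv_apply_not_isUnit _ hA, nonsing_inv_apply_not_isUnit _ hcA, smul_zero]

theorem eventually_isUnit_of_tendsto [NormedField 𝕜] {α : Type*} {l : Filter α}
    {f : α → Matrix n n 𝕜} {A : Matrix n n 𝕜} (hf : Tendsto f l (𝓝 A)) (hA : IsUnit A) :
    ∀ᶠ x in l, IsUnit (f x) := by
  have hdet : A.det ≠ 0 := (isUnit_iff_isUnit_det A).mp hA |>.ne_zero
  have hf_det : Tendsto (fun x => (f x).det) l (𝓝 A.det) :=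
    (continuous_id.matrix_det.tendsto A).comp hf
  filter_upwards [hf_det.eventually_ne hdet] with x hx
  exact (isUnit_iff_isUnit_det _).mpr (isUnit_iff_ne_zero.mpr hx)

theorem tendsto_inv_of_tendsto [NormedField 𝕜] {α : Type*} {l : Filter α}
    {f : α → Matrix n n 𝕜} {A : Matrix n n 𝕜} (hf : Tendsto f l (𝓝 A)) (hA : IsUnit A) :
    Tendsto (fun x => (f x)⁻¹) l (𝓝 A⁻¹) := by
  have hdet : A.det ≠ 0 := (isUnit_iff_isUnit_det A).mp hA |>.ne_zero
  refine (continuousAt_matrix_inv A ?_).tendsto.comp hf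
  rw [Ring.inverse_eq_inv']
  exact continuousAt_inv₀ hdet

theorem inv_smul_mul_smul [Field 𝕜] {c : 𝕜} (hc : c ≠ 0) (A B : Matrix n n 𝕜) :
    (c • A)⁻¹ * (c • B) = A⁻¹ * B := by
  rw [inv_smul_of_ne_zero hc, smul_mul, Matrix.mul_smul, smul_smul, inv_mul_cancel₀ hc, one_smul]

theorem eventually_isUnit_of_tendsto_smul [NormedField 𝕜] {α : Type*} {l : Filter α}
    {c : α → 𝕜} {f : α → Matrix n n 𝕜} {A : Matrix n n 𝕜} (hc : ∀ᶠ x in l, c x ≠ 0)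
    (hf : Tendsto (fun x => c x • f x) l (𝓝 A)) (hA : IsUnit A) :
    ∀ᶠ x in l, IsUnit (f x) := by
  filter_upwards [hc, eventually_isUnit_of_tendsto hf hA] with x hcx hx
  exact (isUnit_smul_iff₀ hcx _).mp hx

end Matrix

theorem tendsto_neg_inv_smul_sub_smul {V : Type*} [AddCommGroup V] [Module ℂ V]
    [TopologicalSpace V] [IsTopologicalAddGroup V] [ContinuousSMul ℂ V] (X K : V) :
    Tendsto (fun μ : ℝ => (-(μ : ℂ))⁻¹ • (X - (μ : ℂ) • K)) atTop (𝓝 K) := by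
  have hinv : Tendsto (fun μ : ℝ => ((μ⁻¹ : ℝ) : ℂ)) atTop (𝓝 0) := by
    simpa [Function.comp_def] using
      (Complex.continuous_ofReal.tendsto 0).comp tendsto_inv_atTop_zero
  have hlim : Tendsto (fun μ : ℝ => K - ((μ⁻¹ : ℝ) : ℂ) • X) atTop (𝓝 K) := by
    simpa using tendsto_const_nhds.sub (hinv.smul_const X)
  refine hlim.congr' ?_
  filter_upwards [eventually_ne_atTop 0] with μ hμ
  have hμ' : (μ : ℂ) ≠ 0 := by exact_mod_cast hμ
  rw [smul_sub, smul_smul, inv_neg, neg_mul, inv_mul_cancel₀ hμ']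
  push_cast
  module

section Kronecker

variable {l m n : Type*}

theorem cmplx_mul {p : Type*} [Fintype m] (P : Matrix l m ℝ) (P' : Matrix m p ℝ) :
    cmplx (P * P') = cmplx P * cmplx P' :=
  Matrix.map_mul (f := Complex.ofRealHom)

theorem cmplx_one [DecidableEq m] : cmplx (1 : Matrix m m ℝ) = 1 :=
  Matrix.map_one _ Complex.ofReal_zero Complex.ofReal_one

theorem cmplx_add (P P' : Matrix l m ℝ) : cmplx (P + P') = cmplx P + cmplx P' :=
  Matrix.map_add _ Complex.ofReal_add P P'

variable [DecidableEq l]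

variable (l) in
def idKron (P : Matrix m m ℝ) (A : Matrix n n ℂ) : Matrix (l × m × n) (l × m × n) ℂ :=
  (1 : Matrix l l ℂ) ⊗ₖ (cmplx P ⊗ₖ A)

theorem idKron_mul [Fintype l] [Fintype m] [Fintype n] (P P' : Matrix m m ℝ)
    (A A' : Matrix n n ℂ) : idKron l P A * idKron l P' A' = idKron l (P * P') (A * A') := by
  rw [idKron, idKron, idKron, ← mul_kronecker_mul, ← mul_kronecker_mul, one_mul, cmplx_mul]

theorem idKron_one [DecidableEq m] [DecidableEq n] :
    idKron l (1 : Matrix m m ℝ) (1 : Matrix n n ℂ) = 1 := by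
  rw [idKron, cmplx_one, one_kronecker_one, one_kronecker_one]

theorem idKron_add_left (P P' : Matrix m m ℝ) (A : Matrix n n ℂ) :
    idKron l P A + idKron l P' A = idKron l (P + P') A := by
  rw [idKron, idKron, idKron, cmplx_add, add_kronecker, kronecker_add]

variable [Fintype l] [Fintype m] [Fintype n] [DecidableEq m] [DecidableEq n]

theorem isUnit_idKron {P : Matrix m m ℝ} {A : Matrix n n ℂ} (hP : IsUnit P) (hA : IsUnit A) :
    IsUnit (idKron l P A) := by
  have hP' := (isUnit_iff_isUnit_det P).mp hP
  have hA' := (isUnit_iff_isUnit_det A).mp hA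
  refine ⟨⟨idKron l P A, idKron l P⁻¹ A⁻¹, ?_, ?_⟩, rfl⟩
  · rw [idKron_mul, mul_nonsing_inv _ hP', mul_nonsing_inv _ hA', idKron_one]
  · rw [idKron_mul, nonsing_inv_mul _ hP', nonsing_inv_mul _ hA', idKron_one]

theorem inv_idKron_mul_idKron {P : Matrix m m ℝ} {A : Matrix n n ℂ} (hP : IsUnit P)
    (hA : IsUnit A) (P' : Matrix m m ℝ) :
    (idKron l P A)⁻¹ * idKron l P' A = idKron l (P⁻¹ * P') 1 := by
  have hPP' : idKron l P' A = idKron l P A * idKron l (P⁻¹ * P') 1 := by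
    rw [idKron_mul, ← Matrix.mul_assoc, mul_nonsing_inv _ ((isUnit_iff_isUnit_det P).mp hP),
      Matrix.one_mul, Matrix.mul_one]
  rw [hPP']
  exact nonsing_inv_mul_cancel_left _ _ ((isUnit_iff_isUnit_det _).mp (isUnit_idKron hP hA))

end Kronecker

section PFASST

variable (L : ℕ) {M N : ℕ}

theorem eventually_neg_inv_ne_zero : ∀ᶠ μ : ℝ in atTop, (-(μ : ℂ))⁻¹ ≠ 0 := by
  filter_upwards [eventually_ne_atTop 0] with μ hμ
  simpa using hμ

theorem Ptilde_eq_Cmat (Q : Matrix (Fin M) (Fin M) ℝ) (A : Matrix (Fin N) (Fin N) ℂ) (μ : ℝ) :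
    Ptilde L Q A μ = Cmat L Q A μ := rfl

theorem tendsto_smul_Cmat (Q : Matrix (Fin M) (Fin M) ℝ) (A : Matrix (Fin N) (Fin N) ℂ) :
    Tendsto (fun μ : ℝ => (-(μ : ℂ))⁻¹ • Cmat L Q A μ) atTop (𝓝 (idKron (Fin L) Q A)) := by
  have hC : ∀ μ : ℝ, Cmat L Q A μ = (1 - EH L M N) - (μ : ℂ) • idKron (Fin L) Q A :=
    fun μ => sub_right_comm _ _ _
  simpa only [hC] using tendsto_neg_inv_smul_sub_smul (1 - EH L M N) (idKron (Fin L) Q A)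

theorem tendsto_smul_Phat2 (QΔ : Matrix (Fin M) (Fin M) ℝ) (A : Matrix (Fin N) (Fin N) ℂ) :
    Tendsto (fun μ : ℝ => (-(μ : ℂ))⁻¹ • Phat2 L QΔ A μ) atTop
      (𝓝 ((2 : ℂ) • idKron (Fin L) QΔ A)) := by
  have hP : ∀ μ : ℝ, Phat2 L QΔ A μ = 1 - (μ : ℂ) • ((2 : ℂ) • idKron (Fin L) QΔ A) := by
    intro μ
    rw [Phat2, smul_smul, mul_comm]
    push_cast
    rfl
  simpa only [hP] using tendsto_neg_inv_smul_sub_smul 1 ((2 : ℂ) • idKron (Fin L) QΔ A)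

theorem eventually_isUnit_Cmat {Q : Matrix (Fin M) (Fin M) ℝ} {A : Matrix (Fin N) (Fin N) ℂ}
    (hQ : IsUnit Q) (hA : IsUnit A) : ∀ᶠ μ in atTop, IsUnit (Cmat L Q A μ) :=
  eventually_isUnit_of_tendsto_smul eventually_neg_inv_ne_zero (tendsto_smul_Cmat L Q A)
    (isUnit_idKron hQ hA)

theorem eventually_isUnit_Phat2 {QΔ : Matrix (Fin M) (Fin M) ℝ} {A : Matrix (Fin N) (Fin N) ℂ}
    (hQΔ : IsUnit QΔ) (hA : IsUnit A) : ∀ᶠ μ in atTop, IsUnit (Phat2 L QΔ A μ) :=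
  eventually_isUnit_of_tendsto_smul eventually_neg_inv_ne_zero (tendsto_smul_Phat2 L QΔ A)
    ((isUnit_smul_iff₀ two_ne_zero _).mpr (isUnit_idKron hQΔ hA))

theorem tendsto_Tdamped {Q QΔ : Matrix (Fin M) (Fin M) ℝ} {A : Matrix (Fin N) (Fin N) ℂ}
    (hQΔ : IsUnit QΔ) (hA : IsUnit A) :
    Tendsto (Tdamped L Q QΔ A) atTop
      (𝓝 (1 - ((2 : ℂ) • idKron (Fin L) QΔ A)⁻¹ * idKron (Fin L) Q A)) := by
  refine (tendsto_const_nhds.sub ((tendsto_inv_of_tendsto (tendsto_smul_Phat2 L QΔ A)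
    ((isUnit_smul_iff₀ two_ne_zero _).mpr (isUnit_idKron hQΔ hA))).mul
      (tendsto_smul_Cmat L Q A))).congr' ?_
  filter_upwards [eventually_neg_inv_ne_zero] with μ hμ
  rw [Tdamped, inv_smul_mul_smul hμ]

theorem one_sub_inv_two_smul_idKron_mul {l m n : Type*} [Fintype l] [Fintype m] [Fintype n]
    [DecidableEq l] [DecidableEq m] [DecidableEq n] {Q QΔ : Matrix m m ℝ} {A : Matrix n n ℂ}
    (hQΔ : IsUnit QΔ) (hA : IsUnit A) :
    1 - ((2 : ℂ) • idKron l QΔ A)⁻¹ * idKron l Q A =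
      (2 : ℂ)⁻¹ • (1 + idKron l (1 - QΔ⁻¹ * Q) 1) := by
  have hsplit : idKron l (QΔ⁻¹ * Q) (1 : Matrix n n ℂ) = 1 - idKron l (1 - QΔ⁻¹ * Q) 1 :=
    eq_sub_of_add_eq (by rw [idKron_add_left, add_sub_cancel, idKron_one])
  rw [inv_smul_of_ne_zero two_ne_zero, smul_mul, inv_idKron_mul_idKron hQΔ hA, hsplit]
  module

theorem tendsto_coarse_error {Q : Matrix (Fin M) (Fin M) ℝ} {A : Matrix (Fin N) (Fin N) ℂ}
    {M' N' : ℕ} {QΔt : Matrix (Fin M') (Fin M') ℝ} {At : Matrix (Fin N') (Fin N') ℂ}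
    (TFQ : Matrix (Fin M') (Fin M) ℝ) (TFA : Matrix (Fin N') (Fin N) ℂ)
    (TCQ : Matrix (Fin M) (Fin M') ℝ) (TCA : Matrix (Fin N) (Fin N') ℂ)
    (hQ : IsUnit Q) (hA : IsUnit A) (hQΔt : IsUnit QΔt) (hAt : IsUnit At) :
    Tendsto (fun μ : ℝ => ((Cmat L Q A μ)⁻¹ -
        TCFmat L TCQ TCA * (Ptilde L QΔt At μ)⁻¹ * TFCmat L TFQ TFA) * Cmat L Q A μ) atTop
      (𝓝 (1 - TCFmat L TCQ TCA * (idKron (Fin L) QΔt At)⁻¹ * TFCmat L TFQ TFA *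
        idKron (Fin L) Q A)) := by
  have hsandwich : Continuous fun X : Matrix (Fin L × Fin M' × Fin N') (Fin L × Fin M' × Fin N') ℂ
      × Matrix (Fin L × Fin M × Fin N) (Fin L × Fin M × Fin N) ℂ =>
      TCFmat L TCQ TCA * X.1 * TFCmat L TFQ TFA * X.2 :=
    ((continuous_const.matrix_mul continuous_fst).matrix_mul continuous_const).matrix_mul
      continuous_snd
  have hPt := tendsto_inv_of_tendsto (tendsto_smul_Cmat L QΔt At) (isUnit_idKron hQΔt hAt)
  refine (tendsto_const_nhds.sub ((hsandwich.tendsto _).comp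
    (hPt.prodMk_nhds (tendsto_smul_Cmat L Q A)))).congr' ?_
  filter_upwards [eventually_neg_inv_ne_zero, eventually_isUnit_Cmat L hQ hA] with μ hμ hC
  rw [sub_mul, nonsing_inv_mul _ ((isUnit_iff_isUnit_det _).mp hC), Ptilde_eq_Cmat,
    Function.comp_apply, inv_smul_of_ne_zero hμ]
  simp only [Matrix.mul_smul, Matrix.smul_mul, smul_smul, mul_inv_cancel₀ hμ, one_smul]

end PFASST

section L2OpNorm

open scoped Matrix.Norms.L2Operator

variable {n : Type*} [Fintype n] [DecidableEq n]

theorem opNorm_inv_two_smul_one_add_lt_one {B : Matrix n n ℂ} (hB : opNorm B < 1) :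
    opNorm ((2 : ℂ)⁻¹ • (1 + B)) < 1 := by
  have hone : ‖(1 : Matrix n n ℂ)‖ ≤ 1 := by
    rw [cstar_norm_def, map_one]
    exact ContinuousLinearMap.norm_id_le
  have hB' : ‖B‖ < 1 := hB
  calc ‖(2 : ℂ)⁻¹ • (1 + B)‖ ≤ 2⁻¹ * (‖(1 : Matrix n n ℂ)‖ + ‖B‖) := by
        rw [norm_smul, norm_inv, Complex.norm_two]
        gcongr
        exact norm_add_le _ _
    _ < 1 := by linarith

theorem exists_opNorm_mul_pow_le_of_tendsto {α : Type*} {l : Filter α} {T G : α → Matrix n n ℂ}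
    {T₀ G₀ : Matrix n n ℂ} (hT : Tendsto T l (𝓝 T₀)) (hT₀ : opNorm T₀ < 1)
    (hG : Tendsto G l (𝓝 G₀)) :
    ∃ c > 0, ∀ᶠ x in l, ∀ k : ℕ, 1 ≤ k → opNorm (G x * T x ^ k) ≤ c * √(8 / (k * Real.pi)) :=
  exists_norm_mul_pow_le_of_tendsto hT hT₀ hG

end L2OpNorm

theorem stmt_18_general (L M N M' N' : ℕ)
    (Q QΔ : Matrix (Fin M) (Fin M) ℝ) (A : Matrix (Fin N) (Fin N) ℂ)
    (QΔt : Matrix (Fin M') (Fin M') ℝ) (At : Matrix (Fin N') (Fin N') ℂ)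
    (TFQ : Matrix (Fin M') (Fin M) ℝ) (TFA : Matrix (Fin N') (Fin N) ℂ)
    (TCQ : Matrix (Fin M) (Fin M') ℝ) (TCA : Matrix (Fin N) (Fin N') ℂ)
    (hQ : IsUnit Q) (hQΔ : IsUnit QΔ) (hA : IsUnit A)
    (hQΔt : IsUnit QΔt) (hAt : IsUnit At)
    (hB : opNorm ((1 : Matrix (Fin L) (Fin L) ℂ) ⊗ₖ
        (cmplx ((1 : Matrix (Fin M) (Fin M) ℝ) - QΔ⁻¹ * Q) ⊗ₖ
          (1 : Matrix (Fin N) (Fin N) ℂ))) < 1) :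
    ∃ c > (0 : ℝ), ∃ μs > (0 : ℝ), ∀ μ : ℝ, μs ≤ μ → ∀ k : ℕ, 1 ≤ k →
      IsUnit (Cmat L Q A μ) ∧ IsUnit (Phat2 L QΔ A μ) ∧ IsUnit (Ptilde L QΔt At μ) ∧
      opNorm (((Cmat L Q A μ)⁻¹ -
            TCFmat L TCQ TCA * (Ptilde L QΔt At μ)⁻¹ * TFCmat L TFQ TFA) *
          Cmat L Q A μ * (Tdamped L Q QΔ A μ) ^ k) ≤
        c * Real.sqrt (8 / (k * Real.pi)) := by
  have hT₀ : opNorm (1 - ((2 : ℂ) • idKron (Fin L) QΔ A)⁻¹ * idKron (Fin L) Q A) < 1 := by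
    rw [one_sub_inv_two_smul_idKron_mul hQΔ hA]
    exact opNorm_inv_two_smul_one_add_lt_one hB
  obtain ⟨c, hc, hbound⟩ := exists_opNorm_mul_pow_le_of_tendsto (tendsto_Tdamped L hQΔ hA) hT₀
    (tendsto_coarse_error L TFQ TFA TCQ TCA hQ hA hQΔt hAt)
  obtain ⟨μs, hμs⟩ := eventually_atTop.mp <| (eventually_isUnit_Cmat L hQ hA).and <|
    (eventually_isUnit_Phat2 L hQΔ hA).and <| (eventually_isUnit_Cmat L hQΔt hAt).and hbound
  refine ⟨c, hc, max μs 1, by positivity, fun μ hμ k hk => ?_⟩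
  obtain ⟨hC, hP, hPt, hμk⟩ := hμs μ (le_of_max_le_left hμ)
  exact ⟨hC, hP, hPt, hμk k hk⟩

theorem stmt_18 (L M N M' N' : ℕ) (hL : 0 < L) (hM : 0 < M) (hN : 0 < N)
    (hM' : 0 < M') (hN' : 0 < N')
    (Q QΔ : Matrix (Fin M) (Fin M) ℝ) (A : Matrix (Fin N) (Fin N) ℂ)
    (QΔt : Matrix (Fin M') (Fin M') ℝ) (At : Matrix (Fin N') (Fin N') ℂ)
    (TFQ : Matrix (Fin M') (Fin M) ℝ) (TFA : Matrix (Fin N') (Fin N) ℂ)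
    (TCQ : Matrix (Fin M) (Fin M') ℝ) (TCA : Matrix (Fin N) (Fin N') ℂ)
    (hQ : IsUnit Q) (hQΔ : IsUnit QΔ) (hA : IsUnit A)
    (hQΔt : IsUnit QΔt) (hAt : IsUnit At)
    (hB : opNorm ((1 : Matrix (Fin L) (Fin L) ℂ) ⊗ₖ
        (cmplx ((1 : Matrix (Fin M) (Fin M) ℝ) - QΔ⁻¹ * Q) ⊗ₖ
          (1 : Matrix (Fin N) (Fin N) ℂ))) < 1) :
    ∃ c > (0 : ℝ), ∃ μs > (0 : ℝ), ∀ μ : ℝ, μs ≤ μ → ∀ k : ℕ, 1 ≤ k →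
      IsUnit (Cmat L Q A μ) ∧ IsUnit (Phat2 L QΔ A μ) ∧ IsUnit (Ptilde L QΔt At μ) ∧
      opNorm (((Cmat L Q A μ)⁻¹ -
            TCFmat L TCQ TCA * (Ptilde L QΔt At μ)⁻¹ * TFCmat L TFQ TFA) *
          Cmat L Q A μ * (Tdamped L Q QΔ A μ) ^ k) ≤
        c * Real.sqrt (8 / (k * Real.pi)) :=
  stmt_18_general L M N M' N' Q QΔ A QΔt At TFQ TFA TCQ TCA hQ hQΔ hA hQΔt hAt hB
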